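/- Let q > 0 and a be integers, and let X(q,a) be the space of continuous functions F: ℝ² → ℂ with F(s+1,t) = F(s,t) and F(s,t-q) = e^{2πias} F(s,t). Then for q₁, q₂ > 0 and any a₁, a₂ ∈ ℤ, the direct sum X(q₁,a₁) ⊕ X(q₂,a₂) is isomorphic as a C(𝕋²)-module to X(q₁+q₂, a₁+a₂). -/

import Mathlib

noncomputable section

/-- The projective `C(𝕋²)`-module `X(q,a)`: continuous functions on ℝ² which are
periodic modulo 1 in the first variable and satisfy `F(s,t-q) = e(as) F(s,t)`. -/
def Xset (q a : ℤ) : Set (ℝ × ℝ → ℂ) :=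
  {F | Continuous F ∧ (∀ s t : ℝ, F (s + 1, t) = F (s, t)) ∧
    ∀ s t : ℝ, F (s, t - (q : ℝ)) =
      Complex.exp (2 * Real.pi * Complex.I * (a : ℂ) * (s : ℂ)) * F (s, t)}

/-- Continuous ℤ²-periodic functions on ℝ², i.e. the algebra `C(𝕋²)`. -/
def PerC (f : ℝ × ℝ → ℂ) : Prop :=
  Continuous f ∧ (∀ s t : ℝ, f (s + 1, t) = f (s, t)) ∧ ∀ s t : ℝ, f (s, t + 1) = f (s, t)

open Complex Function
open scoped Real

/-!
An element of `X(q, a)` is determined by its values on the strip `ℝ × [0, q)`, and conversely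
every continuous `Φ` on `ℝ × [0, q]`, `1`-periodic in `s`, with `Φ(s, 0) = e(as) Φ(s, q)`,
extends through `F(s, t - q) = e(as) F(s, t)` to an element of `X(q, a)`.

Putting `F ∈ X(q₁, a₁)` on `[0, q₁]` and `G ∈ X(q₂, a₂)` on `[q₁, q₁ + q₂]` violates the seam
condition of `X(q₁ + q₂, a₁ + a₂)`. This is repaired on the unit windows ending at `q₁` and at
`q₁ + q₂`: for `0 ≤ x ≤ 1` the pair `(F(s, x + q₁ - 1), e(a₂s) G(s, x + q₂ - 1))` is turned into
`(H(s, x + q₁ - 1), e(a₂s) H(s, x + q₁ + q₂ - 1))` by the unitary matrix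
`[[e^{iπx} cos(πx/2), sin(πx/2)], [-e^{iπx} sin(πx/2), cos(πx/2)]]`, a rotation whose phase
removes the sign that a quarter turn leaves at `x = 1`. The inverse is the adjoint matrix, and
since only integer translations in `t` occur, everything commutes with multiplication by
`ℤ²`-periodic functions.
-/

def twist (a : ℤ) (s : ℝ) : ℂ := cexp (2 * π * I * a * s)

lemma twist_ne_zero (a : ℤ) (s : ℝ) : twist a s ≠ 0 := Complex.exp_ne_zero _

lemma twist_add (a b : ℤ) (s : ℝ) : twist (a + b) s = twist a s * twist b s := by
  rw [twist, twist, twist, ← Complex.exp_add]; push_cast; ring_nf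

lemma twist_neg_mul_twist (a : ℤ) (s : ℝ) : twist (-a) s * twist a s = 1 := by
  rw [← twist_add, neg_add_cancel, twist]; simp

lemma twist_add_one (a : ℤ) (s : ℝ) : twist a (s + 1) = twist a s := by
  rw [twist, twist, show 2 * π * I * a * ((s + 1 : ℝ) : ℂ) = 2 * π * I * a * s + a * (2 * π * I) by
    push_cast; ring, Complex.exp_add, exp_int_mul_two_pi_mul_I, mul_one]

@[fun_prop]
lemma continuous_twist (a : ℤ) : Continuous (twist a) := by
  unfold twist; fun_prop

def TwistPeriodic (q : ℝ) (a : ℤ) (F : ℝ × ℝ → ℂ) : Prop :=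
  ∀ s t : ℝ, F (s, t - q) = twist a s * F (s, t)

lemma mem_Xset_iff {q a : ℤ} {F : ℝ × ℝ → ℂ} :
    F ∈ Xset q a ↔ Continuous F ∧ (∀ s t, F (s + 1, t) = F (s, t)) ∧ TwistPeriodic q a F :=
  Iff.rfl

namespace TwistPeriodic

variable {q : ℝ} {a : ℤ} {F : ℝ × ℝ → ℂ}

lemma apply_sub_int_mul (hF : TwistPeriodic q a F) (s t : ℝ) (n : ℤ) :
    F (s, t - n * q) = twist a s ^ n * F (s, t) := by
  have hc := twist_ne_zero a s
  induction n using Int.induction_on with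
  | zero => simp
  | succ n ih =>
    rw [zpow_add_one₀ hc, mul_comm _ (twist a s), mul_assoc, ← ih, ← hF]
    push_cast; ring_nf
  | pred n ih =>
    have h := hF s (t - ((-n - 1 : ℤ) : ℝ) * q)
    rw [show t - ((-n - 1 : ℤ) : ℝ) * q - q = t - ((-n : ℤ) : ℝ) * q by push_cast; ring,
      ih] at h
    rw [zpow_sub_one₀ hc, mul_right_comm, h, mul_comm (twist a s), mul_inv_cancel_right₀ hc]

lemma ext {F' : ℝ × ℝ → ℂ} (hq : 0 < q) (hF : TwistPeriodic q a F) (hF' : TwistPeriodic q a F')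
    (h : ∀ s t, 0 ≤ t → t < q → F (s, t) = F' (s, t)) : F = F' := by
  funext ⟨s, t⟩
  have key := h s _ (Int.sub_floor_div_mul_nonneg t hq) (Int.sub_floor_div_mul_lt t hq)
  rwa [hF.apply_sub_int_mul, hF'.apply_sub_int_mul,
    mul_right_inj' (zpow_ne_zero _ (twist_ne_zero a s))] at key

end TwistPeriodic

/-- `e(-b⌊t/q⌋ s) Φ(s, t mod q)`: the extension of `Φ|_{ℝ × [0,q)}` along
`F(s, t - q) = e(bs) F(s, t)`. -/
def twistedExtend (q : ℝ) (b : ℤ) (Φ : ℝ × ℝ → ℂ) (x : ℝ × ℝ) : ℂ :=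
  twist (-(b * ⌊x.2 / q⌋)) x.1 * Φ (x.1, Int.fract (x.2 / q) * q)

section twistedExtend

variable {q : ℝ} {b : ℤ} {Φ : ℝ × ℝ → ℂ}

lemma twistedExtend_apply_of_mem (hq : 0 < q) {s t : ℝ} (h₀ : 0 ≤ t) (h₁ : t < q) :
    twistedExtend q b Φ (s, t) = Φ (s, t) := by
  have ht : 0 ≤ t / q ∧ t / q < 1 := ⟨div_nonneg h₀ hq.le, (div_lt_one hq).2 h₁⟩
  simp [twistedExtend, Int.floor_eq_zero_iff.2 ht, Int.fract_eq_self.2 ht, div_mul_cancel₀ t hq.ne',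
    twist]

lemma twistPeriodic_twistedExtend (hq : q ≠ 0) : TwistPeriodic q b (twistedExtend q b Φ) := by
  intro s t
  have ht : (t - q) / q = t / q - 1 := by field_simp
  simp only [twistedExtend, ht, Int.floor_sub_one, Int.fract_sub_one]
  rw [show -(b * (⌊t / q⌋ - 1)) = b + -(b * ⌊t / q⌋) by ring, twist_add, mul_assoc]

lemma twistedExtend_add_one_fst (hΦ : ∀ s t, Φ (s + 1, t) = Φ (s, t)) (s t : ℝ) :
    twistedExtend q b Φ (s + 1, t) = twistedExtend q b Φ (s, t) := by
  simp only [twistedExtend, twist_add_one, hΦ]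

lemma continuous_twistedExtend (hΦ : Continuous Φ) (hseam : ∀ s, Φ (s, 0) = twist b s * Φ (s, q)) :
    Continuous (twistedExtend q b Φ) := by
  -- `-⌊t/q⌋ = fract (t/q) - t/q`, which puts the map in the form required by `comp_fract`
  let f : ℝ × ℝ → ℝ → ℂ := fun x τ => cexp (2 * π * I * b * x.1 * (τ - x.2 / q)) * Φ (x.1, τ * q)
  have hf : Continuous fun x : ℝ × ℝ => f x (Int.fract (x.2 / q)) := by
    refine ContinuousOn.comp_fract (Continuous.continuousOn ?_) (by fun_prop) fun x => ?_
    · simp only [f]; fun_prop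
    · simp only [f, zero_mul, one_mul, hseam, twist, ← mul_assoc, ← Complex.exp_add]
      push_cast; ring_nf
  convert hf using 2 with x
  simp only [twistedExtend, f, twist, Int.fract]
  push_cast; ring_nf

lemma twistedExtend_mem_Xset {q : ℤ} (hq : 0 < q) (hΦ : Continuous Φ)
    (hΦ₁ : ∀ s t, Φ (s + 1, t) = Φ (s, t)) (hseam : ∀ s, Φ (s, 0) = twist b s * Φ (s, q)) :
    twistedExtend q b Φ ∈ Xset q b :=
  ⟨continuous_twistedExtend hΦ hseam, twistedExtend_add_one_fst hΦ₁,
    twistPeriodic_twistedExtend (by positivity)⟩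

lemma twistedExtend_mul_left (hq : q ≠ 0) {f : ℝ × ℝ → ℂ}
    (hf : ∀ s, Periodic (fun t => f (s, t)) q) :
    twistedExtend q b (fun x => f x * Φ x) = fun x => f x * twistedExtend q b Φ x := by
  funext ⟨s, t⟩
  have ht : Int.fract (t / q) * q = t - ⌊t / q⌋ * q := by
    rw [Int.fract, sub_mul, div_mul_cancel₀ t hq]
  simp only [twistedExtend, ht, (hf s).sub_int_mul_eq]
  ring

end twistedExtend

def ramp (x : ℝ) : ℝ := max 0 (min 1 x)

def rampCos (x : ℝ) : ℂ := Real.cos (π / 2 * ramp x)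

def rampSin (x : ℝ) : ℂ := Real.sin (π / 2 * ramp x)

def rampPhase (x : ℝ) : ℂ := cexp (π * I * ramp x)

section ramp

variable {x : ℝ}

lemma ramp_of_nonpos (hx : x ≤ 0) : ramp x = 0 := by
  simp [ramp, hx]

lemma ramp_of_one_le (hx : 1 ≤ x) : ramp x = 1 := by
  simp [ramp, hx]

lemma rampCos_of_nonpos (hx : x ≤ 0) : rampCos x = 1 := by simp [rampCos, ramp_of_nonpos hx]

lemma rampSin_of_nonpos (hx : x ≤ 0) : rampSin x = 0 := by simp [rampSin, ramp_of_nonpos hx]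

lemma rampPhase_of_nonpos (hx : x ≤ 0) : rampPhase x = 1 := by simp [rampPhase, ramp_of_nonpos hx]

lemma rampCos_of_one_le (hx : 1 ≤ x) : rampCos x = 0 := by simp [rampCos, ramp_of_one_le hx]

lemma rampSin_of_one_le (hx : 1 ≤ x) : rampSin x = 1 := by simp [rampSin, ramp_of_one_le hx]

lemma rampPhase_of_one_le (hx : 1 ≤ x) : rampPhase x = -1 := by
  simp [rampPhase, ramp_of_one_le hx, Complex.exp_pi_mul_I]

lemma rampSin_sq_add_rampCos_sq (x : ℝ) : rampSin x ^ 2 + rampCos x ^ 2 = 1 := by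
  simp only [rampSin, rampCos]; norm_cast; exact Real.sin_sq_add_cos_sq _

lemma rampPhase_ne_zero (x : ℝ) : rampPhase x ≠ 0 := Complex.exp_ne_zero _

lemma rampSin_mul_eq_of_pos {X Y : ℂ} (h : 0 < x → X = Y) : rampSin x * X = rampSin x * Y := by
  rcases le_or_gt x 0 with hx | hx
  · simp [rampSin_of_nonpos hx]
  · rw [h hx]

@[fun_prop]
lemma continuous_ramp : Continuous ramp := by unfold ramp; fun_prop

@[fun_prop]
lemma continuous_rampCos : Continuous rampCos := by unfold rampCos; fun_prop

@[fun_prop]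
lemma continuous_rampSin : Continuous rampSin := by unfold rampSin; fun_prop

@[fun_prop]
lemma continuous_rampPhase : Continuous rampPhase := by unfold rampPhase; fun_prop

end ramp

lemma PerC.apply_sub_intCast {f : ℝ × ℝ → ℂ} (hf : PerC f) (s t : ℝ) (n : ℤ) :
    f (s, t - n) = f (s, t) := by
  simpa using (show Periodic (fun t => f (s, t)) 1 from hf.2.2 s).sub_int_mul_eq n (x := t)

section construction

variable (q₁ q₂ a₁ a₂ : ℤ)

def joinStrip (F G : ℝ × ℝ → ℂ) (x : ℝ × ℝ) : ℂ :=
  rampPhase (x.2 - q₁ + 1) * rampCos (x.2 - q₁ + 1) * F x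
    + rampSin (x.2 - q₁ + 1) * rampCos (x.2 - q₁ - q₂ + 1) * G (x.1, x.2 - q₁)
    - rampPhase (x.2 - q₁ - q₂ + 1) * rampSin (x.2 - q₁ - q₂ + 1) * twist (-a₂) x.1
      * F (x.1, x.2 - q₂)

def join (F G : ℝ × ℝ → ℂ) : ℝ × ℝ → ℂ :=
  twistedExtend (q₁ + q₂ : ℤ) (a₁ + a₂) (joinStrip q₁ q₂ a₂ F G)

def splitFstStrip (H : ℝ × ℝ → ℂ) (x : ℝ × ℝ) : ℂ :=
  (rampPhase (x.2 - q₁ + 1))⁻¹ * (rampCos (x.2 - q₁ + 1) * H x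
    - rampSin (x.2 - q₁ + 1) * twist a₂ x.1 * H (x.1, x.2 + q₂))

def splitFst (H : ℝ × ℝ → ℂ) : ℝ × ℝ → ℂ :=
  twistedExtend q₁ a₁ (splitFstStrip q₁ q₂ a₂ H)

def splitSndStrip (H : ℝ × ℝ → ℂ) (x : ℝ × ℝ) : ℂ :=
  rampSin (x.2 - q₂ + 1) * twist (-a₂) x.1 * H (x.1, x.2 + q₁ - q₂)
    + rampCos (x.2 - q₂ + 1) * H (x.1, x.2 + q₁)

def splitSnd (H : ℝ × ℝ → ℂ) : ℝ × ℝ → ℂ :=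
  twistedExtend q₂ a₂ (splitSndStrip q₁ q₂ a₂ H)

variable {q₁ q₂}

section windows

variable (F G H : ℝ × ℝ → ℂ) {x : ℝ} (s : ℝ)

lemma join_apply_lower (hq₁ : 0 < q₁) (hq₂ : 0 < q₂) (hx₀ : 1 - q₁ ≤ x) (hx₁ : x < 1) :
    join q₁ q₂ a₁ a₂ F G (s, x + q₁ - 1)
      = rampPhase x * rampCos x * F (s, x + q₁ - 1) + rampSin x * G (s, x - 1) := by
  have h₂ : (1 : ℝ) ≤ q₂ := Int.cast_one_le_of_pos hq₂
  rw [join, twistedExtend_apply_of_mem (by exact_mod_cast add_pos hq₁ hq₂) (by linarith)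
    (by push_cast; linarith)]
  simp only [joinStrip]
  rw [rampCos_of_nonpos (by linarith : x + q₁ - 1 - q₁ - q₂ + 1 ≤ 0),
    rampSin_of_nonpos (by linarith : x + q₁ - 1 - q₁ - q₂ + 1 ≤ 0),
    show x + q₁ - 1 - q₁ + 1 = x by ring, show x + q₁ - 1 - q₁ = x - 1 by ring]
  ring

lemma join_apply_upper (hq₁ : 0 < q₁) (hq₂ : 0 < q₂) (hx₀ : 1 - q₂ ≤ x) (hx₁ : x < 1) :
    join q₁ q₂ a₁ a₂ F G (s, x + q₁ + q₂ - 1)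
      = rampCos x * G (s, x + q₂ - 1)
        - rampPhase x * rampSin x * twist (-a₂) s * F (s, x + q₁ - 1) := by
  have h₁ : (1 : ℝ) ≤ q₁ := Int.cast_one_le_of_pos hq₁
  rw [join, twistedExtend_apply_of_mem (by exact_mod_cast add_pos hq₁ hq₂) (by linarith)
    (by push_cast; linarith)]
  simp only [joinStrip]
  rw [show x + q₁ + q₂ - 1 - q₁ - q₂ + 1 = x by ring,
    rampCos_of_one_le (by linarith : 1 ≤ x + q₁ + q₂ - 1 - q₁ + 1),
    rampSin_of_one_le (by linarith : 1 ≤ x + q₁ + q₂ - 1 - q₁ + 1),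
    show x + q₁ + q₂ - 1 - q₁ = x + q₂ - 1 by ring, show x + q₁ + q₂ - 1 - q₂ = x + q₁ - 1 by ring]
  ring

lemma splitFst_apply (hq₁ : 0 < q₁) (hx₀ : 1 - q₁ ≤ x) (hx₁ : x < 1) :
    splitFst q₁ q₂ a₁ a₂ H (s, x + q₁ - 1)
      = (rampPhase x)⁻¹ * (rampCos x * H (s, x + q₁ - 1)
        - rampSin x * twist a₂ s * H (s, x + q₁ + q₂ - 1)) := by
  rw [splitFst, twistedExtend_apply_of_mem (by exact_mod_cast hq₁) (by linarith) (by linarith),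
    splitFstStrip]
  simp only [show x + q₁ - 1 - q₁ + 1 = x by ring, show x + q₁ - 1 + q₂ = x + q₁ + q₂ - 1 by ring]

lemma splitSnd_apply (hq₂ : 0 < q₂) (hx₀ : 1 - q₂ ≤ x) (hx₁ : x < 1) :
    splitSnd q₁ q₂ a₂ H (s, x + q₂ - 1)
      = rampSin x * twist (-a₂) s * H (s, x + q₁ - 1) + rampCos x * H (s, x + q₁ + q₂ - 1) := by
  rw [splitSnd, twistedExtend_apply_of_mem (by exact_mod_cast hq₂) (by linarith) (by linarith)]
  simp only [splitSndStrip]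
  rw [show x + q₂ - 1 - q₂ + 1 = x by ring, show x + q₂ - 1 + q₁ - q₂ = x + q₁ - 1 by ring,
    show x + q₂ - 1 + q₁ = x + q₁ + q₂ - 1 by ring]

end windows

lemma join_mem (hq₁ : 0 < q₁) (hq₂ : 0 < q₂) {F G : ℝ × ℝ → ℂ} (hF : F ∈ Xset q₁ a₁)
    (hG : G ∈ Xset q₂ a₂) : join q₁ q₂ a₁ a₂ F G ∈ Xset (q₁ + q₂) (a₁ + a₂) := by
  obtain ⟨hFc, hF₁, hFq⟩ := mem_Xset_iff.1 hF
  obtain ⟨hGc, hG₁, -⟩ := mem_Xset_iff.1 hG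
  have h₁ : (1 : ℝ) ≤ q₁ := Int.cast_one_le_of_pos hq₁
  have h₂ : (1 : ℝ) ≤ q₂ := Int.cast_one_le_of_pos hq₂
  refine twistedExtend_mem_Xset (add_pos hq₁ hq₂) (by unfold joinStrip; fun_prop)
    (fun s t => by simp only [joinStrip, hF₁, hG₁, twist_add_one]) fun s => ?_
  have hF₀ : F (s, 0) = twist a₁ s * F (s, q₁) := by simpa using hFq s q₁
  simp only [joinStrip]
  push_cast
  rw [rampPhase_of_nonpos (by linarith : (0:ℝ) - q₁ + 1 ≤ 0),
    rampCos_of_nonpos (by linarith : (0:ℝ) - q₁ + 1 ≤ 0),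
    rampSin_of_nonpos (by linarith : (0:ℝ) - q₁ + 1 ≤ 0),
    rampSin_of_nonpos (by linarith : (0:ℝ) - q₁ - q₂ + 1 ≤ 0),
    rampCos_of_one_le (by linarith : 1 ≤ (q₁ + q₂ : ℝ) - q₁ + 1),
    rampSin_of_one_le (by linarith : 1 ≤ (q₁ + q₂ : ℝ) - q₁ + 1),
    rampPhase_of_one_le (by linarith : 1 ≤ (q₁ + q₂ : ℝ) - q₁ - q₂ + 1),
    rampSin_of_one_le (by linarith : 1 ≤ (q₁ + q₂ : ℝ) - q₁ - q₂ + 1),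
    rampCos_of_one_le (by linarith : 1 ≤ (q₁ + q₂ : ℝ) - q₁ - q₂ + 1),
    add_sub_cancel_right, hF₀, twist_add]
  linear_combination (-(twist a₁ s * F (s, q₁))) * twist_neg_mul_twist a₂ s

lemma splitFst_mem (hq₁ : 0 < q₁) {H : ℝ × ℝ → ℂ} (hH : H ∈ Xset (q₁ + q₂) (a₁ + a₂)) :
    splitFst q₁ q₂ a₁ a₂ H ∈ Xset q₁ a₁ := by
  obtain ⟨hHc, hH₁, hHq⟩ := mem_Xset_iff.1 hH
  have h₁ : (1 : ℝ) ≤ q₁ := Int.cast_one_le_of_pos hq₁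
  refine twistedExtend_mem_Xset hq₁
    (by unfold splitFstStrip; fun_prop (disch := exact fun _ => rampPhase_ne_zero _))
    (fun s t => by simp only [splitFstStrip, hH₁, twist_add_one]) fun s => ?_
  have hH₀ : H (s, 0) = twist (a₁ + a₂) s * H (s, q₁ + q₂) := by simpa using hHq s (q₁ + q₂)
  simp only [splitFstStrip]
  rw [rampPhase_of_nonpos (by linarith : (0:ℝ) - q₁ + 1 ≤ 0),
    rampCos_of_nonpos (by linarith : (0:ℝ) - q₁ + 1 ≤ 0),
    rampSin_of_nonpos (by linarith : (0:ℝ) - q₁ + 1 ≤ 0),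
    rampPhase_of_one_le (by linarith : (1:ℝ) ≤ q₁ - q₁ + 1),
    rampCos_of_one_le (by linarith : (1:ℝ) ≤ q₁ - q₁ + 1),
    rampSin_of_one_le (by linarith : (1:ℝ) ≤ q₁ - q₁ + 1), zero_add, hH₀, twist_add]
  ring

lemma splitSnd_mem (hq₂ : 0 < q₂) {H : ℝ × ℝ → ℂ} (hH : H ∈ Xset (q₁ + q₂) (a₁ + a₂)) :
    splitSnd q₁ q₂ a₂ H ∈ Xset q₂ a₂ := by
  obtain ⟨hHc, hH₁, -⟩ := mem_Xset_iff.1 hH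
  have h₂ : (1 : ℝ) ≤ q₂ := Int.cast_one_le_of_pos hq₂
  refine twistedExtend_mem_Xset hq₂ (by unfold splitSndStrip; fun_prop)
    (fun s t => by simp only [splitSndStrip, hH₁, twist_add_one]) fun s => ?_
  simp only [splitSndStrip]
  rw [rampCos_of_nonpos (by linarith : (0:ℝ) - q₂ + 1 ≤ 0),
    rampSin_of_nonpos (by linarith : (0:ℝ) - q₂ + 1 ≤ 0),
    rampCos_of_one_le (by linarith : (1:ℝ) ≤ q₂ - q₂ + 1),
    rampSin_of_one_le (by linarith : (1:ℝ) ≤ q₂ - q₂ + 1),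
    show (q₂ : ℝ) + q₁ - q₂ = 0 + q₁ by ring]
  linear_combination (-H (s, 0 + q₁)) * (twist_neg_mul_twist a₂ s)

lemma join_add (F F' G G' : ℝ × ℝ → ℂ) :
    join q₁ q₂ a₁ a₂ (F + F') (G + G') = join q₁ q₂ a₁ a₂ F G + join q₁ q₂ a₁ a₂ F' G' := by
  funext x
  simp only [join, twistedExtend, joinStrip, Pi.add_apply]
  ring

lemma join_mul_left (hq : q₁ + q₂ ≠ 0) {f : ℝ × ℝ → ℂ} (hf : PerC f) (F G : ℝ × ℝ → ℂ) :
    join q₁ q₂ a₁ a₂ (fun x => f x * F x) (fun x => f x * G x)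
      = fun x => f x * join q₁ q₂ a₁ a₂ F G x := by
  have hstrip : joinStrip q₁ q₂ a₂ (fun x => f x * F x) (fun x => f x * G x)
      = fun x => f x * joinStrip q₁ q₂ a₂ F G x := by
    funext x
    simp only [joinStrip, hf.apply_sub_intCast]
    ring
  rw [join, hstrip, twistedExtend_mul_left (by exact_mod_cast hq) fun s t => ?_, join]
  simpa using (hf.apply_sub_intCast s (t + (q₁ + q₂ : ℤ)) (q₁ + q₂)).symm

lemma splitFst_join (hq₁ : 0 < q₁) (hq₂ : 0 < q₂) {F G : ℝ × ℝ → ℂ} (hF : F ∈ Xset q₁ a₁)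
    (hG : G ∈ Xset q₂ a₂) : splitFst q₁ q₂ a₁ a₂ (join q₁ q₂ a₁ a₂ F G) = F := by
  have h₂ : (1 : ℝ) ≤ q₂ := Int.cast_one_le_of_pos hq₂
  refine (twistPeriodic_twistedExtend (by exact_mod_cast hq₁.ne')).ext (by exact_mod_cast hq₁)
    (mem_Xset_iff.1 hF).2.2 fun s t ht₀ ht₁ => ?_
  obtain ⟨x, rfl⟩ : ∃ x, t = x + q₁ - 1 := ⟨t - q₁ + 1, by ring⟩
  have hupper := rampSin_mul_eq_of_pos fun hx : 0 < x =>
    join_apply_upper a₁ a₂ F G s hq₁ hq₂ (x := x) (by linarith) (by linarith)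
  have hG₁ : G (s, x - 1) = twist a₂ s * G (s, x + q₂ - 1) := by
    rw [← (mem_Xset_iff.1 hG).2.2]; ring_nf
  rw [splitFst_apply _ _ _ _ hq₁ (by linarith) (by linarith),
    join_apply_lower _ _ _ _ _ hq₁ hq₂ (by linarith) (by linarith), hG₁]
  linear_combination (-((rampPhase x)⁻¹ * twist a₂ s)) * hupper
    + ((rampPhase x)⁻¹ * rampPhase x * rampSin x ^ 2 * F (s, x + q₁ - 1)) * twist_neg_mul_twist a₂ s
    + ((rampSin x ^ 2 + rampCos x ^ 2) * F (s, x + q₁ - 1)) * inv_mul_cancel₀ (rampPhase_ne_zero x)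
    + F (s, x + q₁ - 1) * rampSin_sq_add_rampCos_sq x

lemma splitSnd_join (hq₁ : 0 < q₁) (hq₂ : 0 < q₂) {F G : ℝ × ℝ → ℂ} (hG : G ∈ Xset q₂ a₂) :
    splitSnd q₁ q₂ a₂ (join q₁ q₂ a₁ a₂ F G) = G := by
  have h₁ : (1 : ℝ) ≤ q₁ := Int.cast_one_le_of_pos hq₁
  refine (twistPeriodic_twistedExtend (by exact_mod_cast hq₂.ne')).ext (by exact_mod_cast hq₂)
    (mem_Xset_iff.1 hG).2.2 fun s t ht₀ ht₁ => ?_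
  obtain ⟨x, rfl⟩ : ∃ x, t = x + q₂ - 1 := ⟨t - q₂ + 1, by ring⟩
  have hlower := rampSin_mul_eq_of_pos fun hx : 0 < x =>
    join_apply_lower a₁ a₂ F G s hq₁ hq₂ (x := x) (by linarith) (by linarith)
  have hG₁ : G (s, x - 1) = twist a₂ s * G (s, x + q₂ - 1) := by
    rw [← (mem_Xset_iff.1 hG).2.2]; ring_nf
  rw [splitSnd_apply _ _ _ hq₂ (by linarith) (by linarith),
    join_apply_upper _ _ _ _ _ hq₁ hq₂ (by linarith) (by linarith)]
  linear_combination twist (-a₂) s * hlower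
    + (rampSin x ^ 2 * G (s, x + q₂ - 1)) * twist_neg_mul_twist a₂ s
    + (rampSin x ^ 2 * twist (-a₂) s) * hG₁
    + G (s, x + q₂ - 1) * rampSin_sq_add_rampCos_sq x

lemma twistPeriodic_splitSnd (hq₂ : q₂ ≠ 0) (H : ℝ × ℝ → ℂ) :
    TwistPeriodic q₂ a₂ (splitSnd q₁ q₂ a₂ H) :=
  twistPeriodic_twistedExtend (by exact_mod_cast hq₂)

lemma join_split_apply_lower (hq₁ : 0 < q₁) (hq₂ : 0 < q₂) (H : ℝ × ℝ → ℂ) (s : ℝ) {x : ℝ}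
    (hx₀ : 1 - q₁ ≤ x) (hx₁ : x < 1) :
    join q₁ q₂ a₁ a₂ (splitFst q₁ q₂ a₁ a₂ H) (splitSnd q₁ q₂ a₂ H) (s, x + q₁ - 1)
      = H (s, x + q₁ - 1) := by
  have h₂ : (1 : ℝ) ≤ q₂ := Int.cast_one_le_of_pos hq₂
  have hsnd := rampSin_mul_eq_of_pos fun hx : 0 < x =>
    splitSnd_apply (q₁ := q₁) a₂ H s hq₂ (x := x) (by linarith) hx₁
  have hG₁ : splitSnd q₁ q₂ a₂ H (s, x - 1)
      = twist a₂ s * splitSnd q₁ q₂ a₂ H (s, x + q₂ - 1) := by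
    rw [← twistPeriodic_splitSnd a₂ hq₂.ne']; ring_nf
  rw [join_apply_lower _ _ _ _ _ hq₁ hq₂ hx₀ hx₁, splitFst_apply _ _ _ _ hq₁ hx₀ hx₁, hG₁]
  set H₁ := H (s, x + q₁ - 1)
  set H₂ := H (s, x + q₁ + q₂ - 1)
  linear_combination twist a₂ s * hsnd + (rampSin x ^ 2 * H₁) * twist_neg_mul_twist a₂ s
    + (rampCos x ^ 2 * H₁ - rampCos x * rampSin x * twist a₂ s * H₂)
      * mul_inv_cancel₀ (rampPhase_ne_zero x)
    + H₁ * rampSin_sq_add_rampCos_sq x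

lemma join_split_apply_upper (hq₁ : 0 < q₁) (hq₂ : 0 < q₂) (H : ℝ × ℝ → ℂ) (s : ℝ) {x : ℝ}
    (hx₀ : 1 - q₂ ≤ x) (hx₁ : x < 1) :
    join q₁ q₂ a₁ a₂ (splitFst q₁ q₂ a₁ a₂ H) (splitSnd q₁ q₂ a₂ H) (s, x + q₁ + q₂ - 1)
      = H (s, x + q₁ + q₂ - 1) := by
  have h₁ : (1 : ℝ) ≤ q₁ := Int.cast_one_le_of_pos hq₁
  have hfst := rampSin_mul_eq_of_pos fun hx : 0 < x =>
    splitFst_apply (q₂ := q₂) a₁ a₂ H s hq₁ (x := x) (by linarith) hx₁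
  rw [join_apply_upper _ _ _ _ _ hq₁ hq₂ hx₀ hx₁, splitSnd_apply _ _ _ hq₂ hx₀ hx₁]
  set H₁ := H (s, x + q₁ - 1)
  set H₂ := H (s, x + q₁ + q₂ - 1)
  linear_combination (-(rampPhase x * twist (-a₂) s)) * hfst
    - (twist (-a₂) s * rampSin x * (rampCos x * H₁ - rampSin x * twist a₂ s * H₂))
      * mul_inv_cancel₀ (rampPhase_ne_zero x)
    + (rampSin x ^ 2 * H₂) * twist_neg_mul_twist a₂ s + H₂ * rampSin_sq_add_rampCos_sq x

lemma join_splitFst_splitSnd (hq₁ : 0 < q₁) (hq₂ : 0 < q₂) {H : ℝ × ℝ → ℂ}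
    (hH : H ∈ Xset (q₁ + q₂) (a₁ + a₂)) :
    join q₁ q₂ a₁ a₂ (splitFst q₁ q₂ a₁ a₂ H) (splitSnd q₁ q₂ a₂ H) = H := by
  have hQ : (0 : ℝ) < (q₁ + q₂ : ℤ) := by exact_mod_cast add_pos hq₁ hq₂
  refine (twistPeriodic_twistedExtend hQ.ne').ext hQ (mem_Xset_iff.1 hH).2.2
    fun s t ht₀ ht₁ => ?_
  push_cast at ht₁
  rcases lt_or_ge t q₁ with ht | ht
  · obtain ⟨x, rfl⟩ : ∃ x, t = x + q₁ - 1 := ⟨t - q₁ + 1, by ring⟩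
    exact join_split_apply_lower a₁ a₂ hq₁ hq₂ H s (by linarith) (by linarith)
  · obtain ⟨x, rfl⟩ : ∃ x, t = x + q₁ + q₂ - 1 := ⟨t - q₁ - q₂ + 1, by ring⟩
    exact join_split_apply_upper a₁ a₂ hq₁ hq₂ H s (by linarith) (by linarith)

end construction

/-- `X(q₁,a₁) ⊕ X(q₂,a₂) ≅ X(q₁+q₂, a₁+a₂)` as `C(𝕋²)`-modules: there is an
additive, `C(𝕋²)`-linear bijection from the direct sum onto `X(q₁+q₂,a₁+a₂)`. -/
theorem stmt17 (q₁ q₂ a₁ a₂ : ℤ) (hq₁ : 0 < q₁) (hq₂ : 0 < q₂) :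
    ∃ L : (ℝ × ℝ → ℂ) → (ℝ × ℝ → ℂ) → (ℝ × ℝ → ℂ),
      (∀ F ∈ Xset q₁ a₁, ∀ G ∈ Xset q₂ a₂, L F G ∈ Xset (q₁ + q₂) (a₁ + a₂)) ∧
      (∀ F ∈ Xset q₁ a₁, ∀ F' ∈ Xset q₁ a₁, ∀ G ∈ Xset q₂ a₂, ∀ G' ∈ Xset q₂ a₂,
        L (F + F') (G + G') = L F G + L F' G') ∧
      (∀ F ∈ Xset q₁ a₁, ∀ G ∈ Xset q₂ a₂, ∀ f, PerC f →
        L (fun x => f x * F x) (fun x => f x * G x) = fun x => f x * L F G x) ∧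
      (∀ F ∈ Xset q₁ a₁, ∀ F' ∈ Xset q₁ a₁, ∀ G ∈ Xset q₂ a₂, ∀ G' ∈ Xset q₂ a₂,
        L F G = L F' G' → F = F' ∧ G = G') ∧
      (∀ H ∈ Xset (q₁ + q₂) (a₁ + a₂),
        ∃ F ∈ Xset q₁ a₁, ∃ G ∈ Xset q₂ a₂, L F G = H) := by
  refine ⟨join q₁ q₂ a₁ a₂, fun F hF G hG => join_mem a₁ a₂ hq₁ hq₂ hF hG,
    fun F _ F' _ G _ G' _ => join_add a₁ a₂ F F' G G',
    fun F _ G _ f hf => join_mul_left a₁ a₂ (add_pos hq₁ hq₂).ne' hf F G,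
    fun F hF F' hF' G hG G' hG' h => ⟨?_, ?_⟩,
    fun H hH => ⟨_, splitFst_mem a₁ a₂ hq₁ hH, _, splitSnd_mem a₁ a₂ hq₂ hH,
      join_splitFst_splitSnd a₁ a₂ hq₁ hq₂ hH⟩⟩
  · rw [← splitFst_join a₁ a₂ hq₁ hq₂ hF hG, ← splitFst_join a₁ a₂ hq₁ hq₂ hF' hG', h]
  · rw [← splitSnd_join a₁ a₂ hq₁ hq₂ hG, ← splitSnd_join a₁ a₂ hq₁ hq₂ hG', h]
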